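/- arXiv:1008.0369 — 3 statements merged into one kernel-verified Lean document; each statement's English description precedes it below -/
import Mathlib

section
/- Let T : X → Y be a surjective bounded linear operator between Banach spaces with a bounded right inverse R (i.e., T∘R = id_Y). Then for any bounded operator S : X → Y with ‖S - T‖ < 1/‖R‖, the operator S∘R : Y → Y is invertible, and P := id_X - R∘(S∘R)⁻¹∘S is a bounded projection of X onto the kernel of S. -/
/-!
Since `T ∘ R = 1`, we have `S ∘ R = 1 - (T - S) ∘ R` with `‖(T - S) ∘ R‖ ≤ ‖S - T‖ ‖R‖ < 1`,
so `S ∘ R` is invertible by the Neumann series. Then `Q := R ∘ (S ∘ R)⁻¹` is a right inverse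
of `S`, hence `Q ∘ S` is idempotent with kernel `ker S` (as `Q` is injective), and its
complement `1 - Q ∘ S` is a projection onto `ker S`.
-/

open ContinuousLinearMap

namespace LinearMap

variable {R M N : Type*} [Ring R] [AddCommGroup M] [Module R M] [AddCommGroup N] [Module R N]
  {S : M →ₗ[R] N} {Q : N →ₗ[R] M}

theorem isIdempotentElem_comp_of_comp_eq_id (h : S ∘ₗ Q = id) : IsIdempotentElem (Q ∘ₗ S) := by
  rw [IsIdempotentElem, Module.End.mul_eq_comp, comp_assoc, ← comp_assoc S, h, id_comp]

theorem ker_comp_of_comp_eq_id (h : S ∘ₗ Q = id) : ker (Q ∘ₗ S) = ker S :=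
  ker_comp_of_ker_eq_bot S <| ker_eq_bot_of_inverse h

theorem range_id_sub_comp_of_comp_eq_id (h : S ∘ₗ Q = id) : range (id - Q ∘ₗ S) = ker S := by
  rw [← IsIdempotentElem.ker_eq_range (isIdempotentElem_comp_of_comp_eq_id h),
    ker_comp_of_comp_eq_id h]

end LinearMap

namespace ContinuousLinearMap

section Projection

variable {R M N : Type*} [Ring R] [TopologicalSpace M] [AddCommGroup M] [IsTopologicalAddGroup M]
  [Module R M] [TopologicalSpace N] [AddCommGroup N] [Module R N] {S : M →L[R] N} {Q : N →L[R] M}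

theorem isIdempotentElem_id_sub_comp_of_comp_eq_id (h : S.comp Q = ContinuousLinearMap.id R N) :
    IsIdempotentElem (ContinuousLinearMap.id R M - Q.comp S) := by
  rw [← one_def, ← isIdempotentElem_toLinearMap_iff]
  exact (LinearMap.isIdempotentElem_comp_of_comp_eq_id (congr_arg toLinearMap h)).one_sub

theorem range_id_sub_comp_of_comp_eq_id (h : S.comp Q = ContinuousLinearMap.id R N) :
    LinearMap.range ((ContinuousLinearMap.id R M - Q.comp S : M →L[R] M) : M →ₗ[R] M) =
      LinearMap.ker (S : M →ₗ[R] N) := by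
  simpa using LinearMap.range_id_sub_comp_of_comp_eq_id (congr_arg toLinearMap h)

end Projection

variable {𝕜 X Y : Type*} [NontriviallyNormedField 𝕜] [NormedAddCommGroup X] [NormedSpace 𝕜 X]
  [NormedAddCommGroup Y] [NormedSpace 𝕜 Y] [CompleteSpace Y]

theorem isUnit_comp_of_norm_sub_mul_lt_one {T S : X →L[𝕜] Y} {R : Y →L[𝕜] X}
    (hTR : T.comp R = ContinuousLinearMap.id 𝕜 Y) (hS : ‖S - T‖ * ‖R‖ < 1) : IsUnit (S.comp R) := by
  have hSR : S.comp R = 1 - (T - S).comp R := by rw [sub_comp, hTR, one_def, sub_sub_cancel]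
  rw [hSR]
  refine isUnit_one_sub_of_norm_lt_one ?_
  calc ‖(T - S).comp R‖ ≤ ‖T - S‖ * ‖R‖ := opNorm_comp_le _ _
    _ < 1 := by rwa [norm_sub_rev]

end ContinuousLinearMap

theorem stmt_4_general {X Y : Type*} [NormedAddCommGroup X] [NormedSpace ℝ X]
    [NormedAddCommGroup Y] [NormedSpace ℝ Y] [CompleteSpace Y]
    (T S : X →L[ℝ] Y) (R : Y →L[ℝ] X)
    (hTR : T.comp R = ContinuousLinearMap.id ℝ Y)
    (hS : ‖S - T‖ < 1 / ‖R‖) :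
    ∃ V : Y →L[ℝ] Y,
      (S.comp R).comp V = ContinuousLinearMap.id ℝ Y ∧
      V.comp (S.comp R) = ContinuousLinearMap.id ℝ Y ∧
      (ContinuousLinearMap.id ℝ X - (R.comp V).comp S).comp
          (ContinuousLinearMap.id ℝ X - (R.comp V).comp S)
        = ContinuousLinearMap.id ℝ X - (R.comp V).comp S ∧
      LinearMap.range ((ContinuousLinearMap.id ℝ X - (R.comp V).comp S : X →L[ℝ] X) : X →ₗ[ℝ] X)
        = LinearMap.ker (S : X →ₗ[ℝ] Y) := by
  have hR : 0 < ‖R‖ := one_div_pos.1 ((norm_nonneg _).trans_lt hS)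
  obtain ⟨u, hu⟩ := isUnit_comp_of_norm_sub_mul_lt_one hTR ((lt_div_iff₀ hR).1 hS)
  set V : Y →L[ℝ] Y := ↑u⁻¹
  have hright : (S.comp R).comp V = ContinuousLinearMap.id ℝ Y := hu ▸ u.mul_inv
  have hleft : V.comp (S.comp R) = ContinuousLinearMap.id ℝ Y := hu ▸ u.inv_mul
  have hQ : S.comp (R.comp V) = ContinuousLinearMap.id ℝ Y := by rw [← comp_assoc, hright]
  exact ⟨V, hright, hleft, isIdempotentElem_id_sub_comp_of_comp_eq_id hQ,
    range_id_sub_comp_of_comp_eq_id hQ⟩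

/-- If `T : X → Y` is a surjective bounded operator with bounded right inverse `R`,
then any bounded `S` with `‖S - T‖ < 1/‖R‖` has `S ∘ R` invertible, and
`P = id - R ∘ (S∘R)⁻¹ ∘ S` is a bounded projection of `X` onto `ker S`. -/
theorem stmt_4 {X Y : Type*} [NormedAddCommGroup X] [NormedSpace ℝ X] [CompleteSpace X]
    [NormedAddCommGroup Y] [NormedSpace ℝ Y] [CompleteSpace Y]
    (T S : X →L[ℝ] Y) (R : Y →L[ℝ] X)
    (hTR : T.comp R = ContinuousLinearMap.id ℝ Y)
    (hS : ‖S - T‖ < 1 / ‖R‖) :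
    ∃ V : Y →L[ℝ] Y,
      (S.comp R).comp V = ContinuousLinearMap.id ℝ Y ∧
      V.comp (S.comp R) = ContinuousLinearMap.id ℝ Y ∧
      (ContinuousLinearMap.id ℝ X - (R.comp V).comp S).comp
          (ContinuousLinearMap.id ℝ X - (R.comp V).comp S)
        = ContinuousLinearMap.id ℝ X - (R.comp V).comp S ∧
      LinearMap.range ((ContinuousLinearMap.id ℝ X - (R.comp V).comp S : X →L[ℝ] X) : X →ₗ[ℝ] X)
        = LinearMap.ker (S : X →ₗ[ℝ] Y) :=
  stmt_4_general T S R hTR hS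
end

section
/- For the problem -f'' = λ f on [0,L] with f(L) = 0 and f'(0) = α f(0), each positive eigenvalue λ(α) = k(α)² with k L ∈ ((n-1)π, nπ) depends strictly monotonically increasingly on α ∈ ℝ: if α < α' then the corresponding n-th eigenvalue satisfies λ_n(α) < λ_n(α'). -/
/-!
Write `g t = -t cos t / sin t`. Dividing the secular equation `k cos (kL) = -α sin (kL)` by
`sin (kL)`, which does not vanish inside a band, turns it into `g (kL) = α L`. For `t > 0` away
from the zeros of `sin`, `g' t = (t - sin t cos t) / sin² t > 0` because `sin (2t) < 2t`; so `g` is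
strictly increasing on each band `((n - 1)π, nπ)` with `n ≥ 1`, and `α L < α' L` forces `kL < k'L`.
-/

open Set Real

theorem sin_ne_zero_of_mem_Ioo_mul_pi {n : ℤ} {t : ℝ} (ht : t ∈ Ioo ((n - 1) * π) (n * π)) :
    sin t ≠ 0 := by
  refine sin_ne_zero_iff.2 fun m hm => ?_
  subst hm
  have h₁ : ((n - 1 : ℤ) : ℝ) < m := by
    push_cast
    exact lt_of_mul_lt_mul_right ht.1 pi_pos.le
  have h₂ : (m : ℝ) < n := lt_of_mul_lt_mul_right ht.2 pi_pos.le
  have : n - 1 < m := by exact_mod_cast h₁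
  have : m < n := by exact_mod_cast h₂
  omega

theorem sin_mul_cos_lt_self {t : ℝ} (ht : 0 < t) : sin t * cos t < t := by
  have h := sin_lt (by linarith : 0 < 2 * t)
  rw [sin_two_mul] at h
  linarith

theorem hasDerivAt_neg_mul_cos_div_sin {t : ℝ} (ht : sin t ≠ 0) :
    HasDerivAt (fun t => -t * cos t / sin t) ((t - sin t * cos t) / sin t ^ 2) t := by
  have hnum : HasDerivAt (fun t => -t * cos t) (-1 * cos t + -t * -sin t) t :=
    (hasDerivAt_id t).neg.mul (hasDerivAt_cos t)
  refine (hnum.div (hasDerivAt_sin t) ht).congr_deriv ?_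
  field_simp
  linear_combination t * sin_sq_add_cos_sq t

theorem strictMonoOn_neg_mul_cos_div_sin {a b : ℝ} (ha : 0 ≤ a)
    (hsin : ∀ t ∈ Ioo a b, sin t ≠ 0) :
    StrictMonoOn (fun t => -t * cos t / sin t) (Ioo a b) := by
  have hderiv : ∀ t ∈ Ioo a b,
      HasDerivAt (fun t => -t * cos t / sin t) ((t - sin t * cos t) / sin t ^ 2) t :=
    fun t ht => hasDerivAt_neg_mul_cos_div_sin (hsin t ht)
  refine strictMonoOn_of_deriv_pos (convex_Ioo a b)
    (fun t ht => (hderiv t ht).continuousAt.continuousWithinAt) fun t ht => ?_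
  rw [interior_Ioo] at ht
  rw [(hderiv t ht).deriv]
  have := sin_mul_cos_lt_self (ha.trans_lt ht.1)
  have := hsin t ht
  exact div_pos (by linarith) (by positivity)

theorem neg_mul_cos_div_sin_eq_of_secular {k L α : ℝ} (hsin : sin (k * L) ≠ 0)
    (hsec : k * cos (k * L) = -α * sin (k * L)) :
    -(k * L) * cos (k * L) / sin (k * L) = α * L := by
  rw [div_eq_iff hsin]
  linear_combination (-L) * hsec

theorem stmt_11_general (L : ℝ) (hL : 0 < L) (n : ℕ) (hn : 1 ≤ n)
    (α α' : ℝ) (hαα' : α < α')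
    (k k' : ℝ) (hk : 0 < k)
    (hband : k * L ∈ Ioo (((n : ℝ) - 1) * π) ((n : ℝ) * π))
    (hband' : k' * L ∈ Ioo (((n : ℝ) - 1) * π) ((n : ℝ) * π))
    (hsec : k * Real.cos (k * L) = -α * Real.sin (k * L))
    (hsec' : k' * Real.cos (k' * L) = -α' * Real.sin (k' * L)) :
    k ^ 2 < k' ^ 2 := by
  have hsin : ∀ t ∈ Ioo (((n : ℝ) - 1) * π) ((n : ℝ) * π), sin t ≠ 0 := fun t ht =>
    sin_ne_zero_of_mem_Ioo_mul_pi (n := n) (by exact_mod_cast ht)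
  have hband_nonneg : 0 ≤ ((n : ℝ) - 1) * π :=
    mul_nonneg (sub_nonneg.2 (by exact_mod_cast hn)) pi_pos.le
  have hmono := strictMonoOn_neg_mul_cos_div_sin hband_nonneg hsin
  have hkL : k * L < k' * L := by
    refine (hmono.lt_iff_lt hband hband').1 ?_
    simp only [neg_mul_cos_div_sin_eq_of_secular (hsin _ hband) hsec,
      neg_mul_cos_div_sin_eq_of_secular (hsin _ hband') hsec']
    exact mul_lt_mul_of_pos_right hαα' hL
  exact pow_lt_pow_left₀ (lt_of_mul_lt_mul_right hkL hL.le) hk.le two_ne_zero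

/-- Strict monotonicity in `α` of the positive eigenvalues of `-f'' = λ f` on `[0,L]`
with `f(L) = 0`, `f'(0) = α f(0)`: if `k, k' > 0` solve the secular equation
`k cos(kL) = -α sin(kL)` for coupling constants `α < α'` respectively, and both
`kL, k'L` lie in the same band `((n-1)π, nπ)`, then `λ_n(α) = k² < k'² = λ_n(α')`. -/
theorem stmt_11 (L : ℝ) (hL : 0 < L) (n : ℕ) (hn : 1 ≤ n)
    (α α' : ℝ) (hαα' : α < α')
    (k k' : ℝ) (hk : 0 < k) (hk' : 0 < k')
    (hband : k * L ∈ Ioo (((n : ℝ) - 1) * π) ((n : ℝ) * π))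
    (hband' : k' * L ∈ Ioo (((n : ℝ) - 1) * π) ((n : ℝ) * π))
    (hsec : k * Real.cos (k * L) = -α * Real.sin (k * L))
    (hsec' : k' * Real.cos (k' * L) = -α' * Real.sin (k' * L)) :
    k ^ 2 < k' ^ 2 :=
  stmt_11_general L hL n hn α α' hαα' k k' hk hband hband' hsec hsec'
end

section
/- Dirichlet–Robin interlacing on an interval: let λ_n denote the n-th eigenvalue of -f'' = λf on [0,L] with f(L)=0 and Robin condition f'(0) = α f(0), and let μ_n denote the n-th Dirichlet eigenvalue (f(0) = f(L) = 0), i.e., μ_n = (nπ/L)². Then for every n, λ_n ≤ μ_n ≤ λ_{n+1}. -/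
open Set Real

/-- `f` is an eigenfunction of `-d²/dx²` on `[0, L]` with eigenvalue `μ`,
Dirichlet condition at `x = L` and Robin condition `f'(0) = α f(0)` at `x = 0`. -/
def IsRobinDirichletEF (L α μ : ℝ) (f : ℝ → ℝ) : Prop :=
  ContDiff ℝ 2 f ∧
  (∀ x ∈ Icc 0 L, -(deriv (deriv f) x) = μ * f x) ∧
  f L = 0 ∧ deriv f 0 = α * f 0 ∧
  ∃ x ∈ Icc 0 L, f x ≠ 0

/-!
Since `f(L) = 0`, uniqueness for `-f'' = μ f` at `x = L` makes every eigenfunction a multiple of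
the solution `v` with `v(L) = 0`, `v'(L) ≠ 0`; hence `μ` is an eigenvalue iff `v'(0) = α v(0)`.
For `μ = (u/L)²` this reads `u cos u + αL sin u = 0`, for `μ = -(u/L)²` it reads
`u cosh u + αL sinh u = 0`, and `0` is an eigenvalue iff `αL = -1`. As `u cot u` decreases
strictly between consecutive zeros of `sin`, and `u coth u > 1 > u cot u` on `(0, π)`, each band
`[(kπ/L)², ((k+1)π/L)²)`, the lowest one extended to `-∞`, contains exactly one eigenvalue.
So exactly `n - 1` Dirichlet eigenvalues do not exceed `lam n`, which is the interlacing.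
-/

theorem eq_zero_of_hasDerivAt_neg_mul_of_right {u u' : ℝ → ℝ} {μ a b : ℝ}
    (hu : ∀ x ∈ Icc a b, HasDerivAt u (u' x) x)
    (hu' : ∀ x ∈ Icc a b, HasDerivAt u' (-(μ * u x)) x)
    (hb : u b = 0) (hb' : u' b = 0) :
    ∀ x ∈ Icc a b, u x = 0 ∧ u' x = 0 := by
  let A : ℝ × ℝ →L[ℝ] ℝ × ℝ :=
    (ContinuousLinearMap.snd ℝ ℝ ℝ).prod (-μ • ContinuousLinearMap.fst ℝ ℝ ℝ)
  have hF : ∀ x ∈ Icc a b, HasDerivAt (fun y => (u y, u' y)) (A (u x, u' x)) x := fun x hx => by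
    simpa [A] using (hu x hx).prodMk (hu' x hx)
  have h := ODE_solution_unique_of_mem_Icc_left (v := fun _ => A) (s := fun _ => univ)
    (f := fun y => (u y, u' y)) (g := fun _ => 0) (fun _ _ => A.lipschitz.lipschitzOnWith)
    (fun x hx => (hF x hx).continuousAt.continuousWithinAt)
    (fun x hx => (hF x (Ioc_subset_Icc_self hx)).hasDerivWithinAt) (fun _ _ => trivial)
    continuousOn_const (fun x _ => by simpa using hasDerivWithinAt_const x _ (0 : ℝ × ℝ))
    (fun _ _ => trivial) (by simp [hb, hb'])
  exact fun x hx => Prod.ext_iff.mp (h hx)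

theorem exists_mem_Icc_ne_zero_of_hasDerivAt {v : ℝ → ℝ} {d L : ℝ} (hL : 0 < L)
    (hv : HasDerivAt v d L) (hvL : v L = 0) (hd : d ≠ 0) : ∃ x ∈ Icc 0 L, v x ≠ 0 := by
  by_contra! h
  have hzero : HasDerivWithinAt v 0 (Icc 0 L) L :=
    (hasDerivWithinAt_const L _ 0).congr h hvL
  exact hd ((uniqueDiffOn_Icc hL L (right_mem_Icc.mpr hL.le)).eq_deriv _
    hv.hasDerivWithinAt hzero)

namespace IsRobinDirichletEF

variable {L α μ : ℝ} {f : ℝ → ℝ}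

theorem hasDerivAt (hf : IsRobinDirichletEF L α μ f) (x : ℝ) : HasDerivAt f (deriv f x) x :=
  (hf.1.differentiable (by norm_num) x).hasDerivAt

theorem hasDerivAt_deriv (hf : IsRobinDirichletEF L α μ f) {x : ℝ} (hx : x ∈ Icc 0 L) :
    HasDerivAt (deriv f) (-(μ * f x)) x := by
  rw [← hf.2.1 x hx, neg_neg]
  exact ((hf.1.deriv' (n := 1)).differentiable one_ne_zero x).hasDerivAt

theorem robin_of_hasDerivAt (hf : IsRobinDirichletEF L α μ f) {v v' : ℝ → ℝ}
    (hv : ∀ x, HasDerivAt v (v' x) x) (hv' : ∀ x, HasDerivAt v' (-(μ * v x)) x)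
    (hvL : v L = 0) (hv'L : v' L ≠ 0) : v' 0 = α * v 0 := by
  set c := deriv f L / v' L
  have hdiff := eq_zero_of_hasDerivAt_neg_mul_of_right (u := fun x => f x - c * v x)
    (u' := fun x => deriv f x - c * v' x) (a := 0) (b := L) (μ := μ)
    (fun x _ => (hf.hasDerivAt x).sub ((hv x).const_mul c))
    (fun x hx => ((hf.hasDerivAt_deriv hx).sub ((hv' x).const_mul c)).congr_deriv (by ring))
    (by simp [hf.2.2.1, hvL]) (by simp [c, hv'L])
  obtain ⟨-, -, -, hrob, x₀, hx₀, hfx₀⟩ := hf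
  have hc : c ≠ 0 := by
    rintro hc
    exact hfx₀ (by simpa [hc] using (hdiff x₀ hx₀).1)
  have h0 : (0 : ℝ) ∈ Icc 0 L := ⟨le_rfl, hx₀.1.trans hx₀.2⟩
  obtain ⟨hf0, hf'0⟩ := hdiff 0 h0
  apply mul_left_cancel₀ hc
  linear_combination hrob - hf'0 + α * hf0

end IsRobinDirichletEF

section Shooting

variable {L α μ : ℝ} {v v' : ℝ → ℝ}

theorem isRobinDirichletEF_of_hasDerivAt (hL : 0 < L) (hv : ∀ x, HasDerivAt v (v' x) x)
    (hv' : ∀ x, HasDerivAt v' (-(μ * v x)) x) (hvL : v L = 0) (hv'L : v' L ≠ 0)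
    (hrob : v' 0 = α * v 0) : IsRobinDirichletEF L α μ v := by
  have hvd : Differentiable ℝ v := fun x => (hv x).differentiableAt
  have hderiv : deriv v = v' := funext fun x => (hv x).deriv
  have hderiv2 : deriv v' = fun x => -(μ * v x) := funext fun x => (hv' x).deriv
  have hv'C1 : ContDiff ℝ 1 v' := contDiff_one_iff_deriv.mpr
    ⟨fun x => (hv' x).differentiableAt, by
      rw [hderiv2]
      exact (continuous_const.mul hvd.continuous).neg⟩
  refine ⟨(contDiff_succ_iff_deriv (n := 1)).mpr ⟨hvd, by simp, ?_⟩,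
    fun x _ => ?_, hvL, by rw [hderiv, hrob],
    exists_mem_Icc_ne_zero_of_hasDerivAt hL (hv L) hvL hv'L⟩
  · rwa [hderiv]
  · rw [hderiv, hderiv2, neg_neg]

theorem exists_isRobinDirichletEF_iff_of_hasDerivAt (hL : 0 < L)
    (hv : ∀ x, HasDerivAt v (v' x) x) (hv' : ∀ x, HasDerivAt v' (-(μ * v x)) x)
    (hvL : v L = 0) (hv'L : v' L ≠ 0) :
    (∃ f, IsRobinDirichletEF L α μ f) ↔ v' 0 = α * v 0 :=
  ⟨fun ⟨_, hf⟩ => hf.robin_of_hasDerivAt hv hv' hvL hv'L,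
    fun hrob => ⟨v, isRobinDirichletEF_of_hasDerivAt hL hv hv' hvL hv'L hrob⟩⟩

end Shooting

section Explicit

variable {L α μ : ℝ}

theorem hasDerivAt_mul_sub (c L x : ℝ) : HasDerivAt (fun y => c * (L - y)) (-c) x :=
  (((hasDerivAt_id x).const_sub L).const_mul c).congr_deriv (by ring)

theorem exists_isRobinDirichletEF_iff_of_pos (hL : 0 < L) (hμ : 0 < μ) :
    (∃ f, IsRobinDirichletEF L α μ f) ↔
      √μ * L * cos (√μ * L) + α * L * sin (√μ * L) = 0 := by
  have hs : √μ * √μ = μ := mul_self_sqrt hμ.le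
  rw [exists_isRobinDirichletEF_iff_of_hasDerivAt hL (v := fun x => sin (√μ * (L - x)))
    (v' := fun x => -(√μ * cos (√μ * (L - x))))
    (fun x => ((hasDerivAt_mul_sub _ L x).sin).congr_deriv (by ring))
    (fun x => (((hasDerivAt_mul_sub _ L x).cos).const_mul _).neg.congr_deriv
      (by linear_combination -sin (√μ * (L - x)) * hs))
    (by simp) (by simpa using (sqrt_pos.mpr hμ).ne')]
  rw [show √μ * L * cos (√μ * L) + α * L * sin (√μ * L)
      = L * (√μ * cos (√μ * L) + α * sin (√μ * L)) by ring, mul_eq_zero, or_iff_right hL.ne']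
  simp only [sub_zero, neg_eq_iff_add_eq_zero]

theorem exists_isRobinDirichletEF_iff_of_neg (hL : 0 < L) (hμ : μ < 0) :
    (∃ f, IsRobinDirichletEF L α μ f) ↔
      √(-μ) * L * cosh (√(-μ) * L) + α * L * sinh (√(-μ) * L) = 0 := by
  have hs : √(-μ) * √(-μ) = -μ := mul_self_sqrt (neg_nonneg.mpr hμ.le)
  rw [exists_isRobinDirichletEF_iff_of_hasDerivAt hL (v := fun x => sinh (√(-μ) * (L - x)))
    (v' := fun x => -(√(-μ) * cosh (√(-μ) * (L - x))))
    (fun x => ((hasDerivAt_mul_sub _ L x).sinh).congr_deriv (by ring))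
    (fun x => (((hasDerivAt_mul_sub _ L x).cosh).const_mul _).neg.congr_deriv
      (by linear_combination sinh (√(-μ) * (L - x)) * hs))
    (by simp) (by simpa using (sqrt_pos.mpr (neg_pos.mpr hμ)).ne')]
  rw [show √(-μ) * L * cosh (√(-μ) * L) + α * L * sinh (√(-μ) * L)
      = L * (√(-μ) * cosh (√(-μ) * L) + α * sinh (√(-μ) * L)) by ring, mul_eq_zero,
    or_iff_right hL.ne']
  simp only [sub_zero, neg_eq_iff_add_eq_zero]

theorem exists_isRobinDirichletEF_zero_iff (hL : 0 < L) :
    (∃ f, IsRobinDirichletEF L α 0 f) ↔ α * L = -1 := by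
  rw [exists_isRobinDirichletEF_iff_of_hasDerivAt hL (v := fun x => L - x) (v' := fun _ => -1)
    (fun x => ((hasDerivAt_id x).const_sub L).congr_deriv rfl)
    (fun x => (hasDerivAt_const x (-1 : ℝ)).congr_deriv (by ring)) (by simp) (by simp)]
  simp only [sub_zero]
  constructor <;> intro h <;> linarith

end Explicit

theorem mul_cos_lt_sin {u : ℝ} (h0 : 0 < u) (hπ : u < π) : u * cos u < sin u := by
  rcases lt_or_ge u (π / 2) with hu | hu
  · have hcos : 0 < cos u := cos_pos_of_mem_Ioo ⟨by linarith, hu⟩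
    have := lt_tan h0 hu
    rwa [tan_eq_sin_div_cos, lt_div_iff₀ hcos] at this
  · have hcos : cos u ≤ 0 := cos_nonpos_of_pi_div_two_le_of_le hu (by linarith)
    nlinarith [sin_pos_of_pos_of_lt_pi h0 hπ]

theorem sinh_lt_mul_cosh {u : ℝ} (hu : 0 < u) : sinh u < u * cosh u := by
  obtain ⟨c, hc, hslope⟩ := exists_hasDerivAt_eq_slope sinh cosh hu
    continuous_sinh.continuousOn fun x _ => hasDerivAt_sinh x
  have hcosh : cosh c < cosh u := by
    rw [cosh_lt_cosh, abs_of_pos hc.1, abs_of_pos hu]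
    exact hc.2
  rw [sinh_zero, sub_zero, sub_zero, eq_div_iff hu.ne'] at hslope
  nlinarith

theorem exists_pos_lt_zero_of_hasDerivAt {g : ℝ → ℝ} {d ε : ℝ} (hg : HasDerivAt g d 0)
    (hg0 : g 0 = 0) (hd : d < 0) (hε : 0 < ε) : ∃ u ∈ Ioo 0 ε, g u < 0 := by
  have hslope := hg.hasDerivWithinAt.limsup_slope_le' (s := Ioi 0) self_notMem_Ioi hd
  obtain ⟨u, hgu, hu⟩ := (hslope.and (Ioo_mem_nhdsGT hε)).exists
  rw [slope_def_field, hg0, sub_zero, sub_zero, div_neg_iff] at hgu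
  rcases hgu with ⟨-, hu_neg⟩ | ⟨hgu, -⟩
  · linarith [hu.1]
  · exact ⟨u, hu, hgu⟩

theorem sin_ne_zero_of_mem_Ioo {k : ℕ} {u : ℝ} (hu : u ∈ Ioo (k * π) ((k + 1) * π)) :
    sin u ≠ 0 := by
  rw [Ne, sin_eq_zero_iff]
  rintro ⟨n, rfl⟩
  have h1 : (k : ℝ) < n := lt_of_mul_lt_mul_right hu.1 pi_pos.le
  have h2 : (n : ℝ) < k + 1 := lt_of_mul_lt_mul_right hu.2 pi_pos.le
  norm_cast at h1 h2
  omega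

theorem mem_Ioo_floor_of_sin_ne_zero {u : ℝ} (hu : 0 ≤ u) (hsin : sin u ≠ 0) :
    u ∈ Ioo (⌊u / π⌋₊ * π) ((⌊u / π⌋₊ + 1) * π) := by
  have h1 := Nat.floor_le (div_nonneg hu pi_pos.le)
  have h2 := Nat.lt_floor_add_one (u / π)
  rw [le_div_iff₀ pi_pos] at h1
  rw [div_lt_iff₀ pi_pos] at h2
  refine ⟨h1.lt_of_ne fun h => hsin ?_, h2⟩
  rw [← h, sin_nat_mul_pi]

theorem sin_ne_zero_of_mul_cos_add_mul_sin_eq_zero {a u : ℝ} (hu : u ≠ 0)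
    (h : u * cos u + a * sin u = 0) : sin u ≠ 0 := by
  intro hsin
  have hcos : cos u = 0 := by simpa [hsin, hu] using h
  simpa [hsin, hcos] using sin_sq_add_cos_sq u

theorem hasDerivAt_mul_cos_div_sin {u : ℝ} (hsin : sin u ≠ 0) :
    HasDerivAt (fun u => u * cos u / sin u) ((sin u * cos u - u) / sin u ^ 2) u :=
  (((hasDerivAt_id' u).mul (hasDerivAt_cos u)).div (hasDerivAt_sin u) hsin).congr_deriv <| by
    simp only [Pi.mul_apply]
    congr 1
    linear_combination (-u) * sin_sq_add_cos_sq u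

theorem strictAntiOn_mul_cos_div_sin (k : ℕ) :
    StrictAntiOn (fun u => u * cos u / sin u) (Ioo (k * π) ((k + 1) * π)) := by
  refine strictAntiOn_of_hasDerivWithinAt_neg (convex_Ioo _ _)
    (f' := fun u => (sin u * cos u - u) / sin u ^ 2)
    (fun u hu =>
      (hasDerivAt_mul_cos_div_sin (sin_ne_zero_of_mem_Ioo hu)).continuousAt.continuousWithinAt)
    ?_ ?_ <;> rw [interior_Ioo] <;> intro u hu
  · exact (hasDerivAt_mul_cos_div_sin (sin_ne_zero_of_mem_Ioo hu)).hasDerivWithinAt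
  · have hu0 : 0 < u := lt_of_le_of_lt (by positivity) hu.1
    have h2u := sin_lt (mul_pos two_pos hu0)
    rw [sin_two_mul] at h2u
    exact div_neg_of_neg_of_pos (by linarith) (sq_pos_of_ne_zero (sin_ne_zero_of_mem_Ioo hu))

theorem hasDerivAt_mul_cosh_div_sinh {u : ℝ} (hsinh : sinh u ≠ 0) :
    HasDerivAt (fun u => u * cosh u / sinh u) ((sinh u * cosh u - u) / sinh u ^ 2) u :=
  (((hasDerivAt_id' u).mul (hasDerivAt_cosh u)).div (hasDerivAt_sinh u) hsinh).congr_deriv <| by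
    simp only [Pi.mul_apply]
    congr 1
    linear_combination (-u) * cosh_sq_sub_sinh_sq u

theorem strictMonoOn_mul_cosh_div_sinh :
    StrictMonoOn (fun u => u * cosh u / sinh u) (Ioi 0) := by
  have hsinh : ∀ u ∈ Ioi (0 : ℝ), sinh u ≠ 0 := fun u hu => (sinh_pos_iff.mpr hu).ne'
  refine strictMonoOn_of_hasDerivWithinAt_pos (convex_Ioi _)
    (f' := fun u => (sinh u * cosh u - u) / sinh u ^ 2)
    (fun u hu =>
      (hasDerivAt_mul_cosh_div_sinh (hsinh u hu)).continuousAt.continuousWithinAt)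
    ?_ ?_ <;> rw [interior_Ioi] <;> intro u hu
  · exact (hasDerivAt_mul_cosh_div_sinh (hsinh u hu)).hasDerivWithinAt
  · have h2u := self_lt_sinh_iff.mpr (mul_pos two_pos hu)
    rw [sinh_two_mul] at h2u
    exact div_pos (by linarith) (pow_pos (sinh_pos_iff.mpr hu) 2)

theorem eq_of_mul_cos_add_mul_sin_eq_zero {a u v : ℝ} (hu : 0 < u) (hv : 0 < v)
    (hk : ⌊u / π⌋₊ = ⌊v / π⌋₊) (hu0 : u * cos u + a * sin u = 0)
    (hv0 : v * cos v + a * sin v = 0) : u = v := by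
  have hcot : ∀ w, w ≠ 0 → w * cos w + a * sin w = 0 → sin w ≠ 0 ∧ w * cos w / sin w = -a :=
    fun w hw h => have hsin := sin_ne_zero_of_mul_cos_add_mul_sin_eq_zero hw h
      ⟨hsin, by rw [div_eq_iff hsin]; linarith⟩
  obtain ⟨hsu, hu'⟩ := hcot u hu.ne' hu0
  obtain ⟨hsv, hv'⟩ := hcot v hv.ne' hv0
  have hvband := mem_Ioo_floor_of_sin_ne_zero hv.le hsv
  rw [← hk] at hvband
  exact (strictAntiOn_mul_cos_div_sin _).injOn (mem_Ioo_floor_of_sin_ne_zero hu.le hsu) hvband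
    (hu'.trans hv'.symm)

theorem eq_of_mul_cosh_add_mul_sinh_eq_zero {a u v : ℝ} (hu : 0 < u) (hv : 0 < v)
    (hu0 : u * cosh u + a * sinh u = 0) (hv0 : v * cosh v + a * sinh v = 0) : u = v := by
  have hcoth : ∀ w, 0 < w → w * cosh w + a * sinh w = 0 → w * cosh w / sinh w = -a :=
    fun w hw h => by rw [div_eq_iff (sinh_pos_iff.mpr hw).ne']; linarith
  exact strictMonoOn_mul_cosh_div_sinh.injOn hu hv
    ((hcoth u hu hu0).trans (hcoth v hv hv0).symm)

theorem exists_mem_Ioo_mul_cos_add_mul_sin_eq_zero (a : ℝ) {k : ℕ} (hk : k ≠ 0) :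
    ∃ u ∈ Ioo (k * π) ((k + 1) * π), u * cos u + a * sin u = 0 := by
  have hsign : ((-1 : ℝ) ^ k) * (-1) ^ k = 1 := by rw [← mul_pow]; norm_num
  have hlow : (-1) ^ k * (k * π * cos (k * π) + a * sin (k * π)) = k * π := by
    rw [cos_nat_mul_pi, sin_nat_mul_pi]
    linear_combination (k * π) * hsign
  have hhigh : (-1) ^ k * ((k + 1) * π * cos ((k + 1) * π) + a * sin ((k + 1) * π))
      = -((k + 1) * π) := by
    have hcos := cos_nat_mul_pi (k + 1)
    have hsin := sin_nat_mul_pi (k + 1)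
    push_cast at hcos hsin
    rw [hcos, hsin, pow_succ]
    linear_combination (-((k + 1) * π)) * hsign
  have hk0 : (0 : ℝ) < k := by positivity
  obtain ⟨u, hu, hgu⟩ := intermediate_value_Ioo' (a := k * π) (b := (k + 1) * π)
    (f := fun u => (-1) ^ k * (u * cos u + a * sin u)) (by nlinarith [pi_pos])
    (by fun_prop)
    (show (0 : ℝ) ∈ Ioo _ _ by rw [hlow, hhigh]; constructor <;> nlinarith [pi_pos])
  exact ⟨u, hu, (mul_eq_zero.mp hgu).resolve_left (pow_ne_zero _ (by norm_num))⟩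

theorem exists_mem_Ioo_zero_pi_mul_cos_add_mul_sin_eq_zero {a : ℝ} (ha : -1 < a) :
    ∃ u ∈ Ioo 0 π, u * cos u + a * sin u = 0 := by
  have hderiv : HasDerivAt (fun u => -(u * cos u + a * sin u)) (-(1 + a)) 0 :=
    (((hasDerivAt_id' 0).mul (hasDerivAt_cos 0)).add
      ((hasDerivAt_sin 0).const_mul a)).neg.congr_deriv (by simp)
  obtain ⟨u₁, hu₁, hgu₁⟩ :=
    exists_pos_lt_zero_of_hasDerivAt hderiv (by simp) (by linarith) pi_pos
  obtain ⟨u, hu, hgu⟩ := intermediate_value_Ioo' (a := u₁) (b := π)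
    (f := fun u => u * cos u + a * sin u) hu₁.2.le (by fun_prop)
    (show (0 : ℝ) ∈ Ioo _ _ by simp only [cos_pi, sin_pi]; constructor <;> linarith [pi_pos])
  exact ⟨u, ⟨hu₁.1.trans hu.1, hu.2⟩, hgu⟩

theorem exists_pos_mul_cosh_add_mul_sinh_eq_zero {a : ℝ} (ha : a < -1) :
    ∃ u, 0 < u ∧ u * cosh u + a * sinh u = 0 := by
  have hderiv : HasDerivAt (fun u => u * cosh u + a * sinh u) (1 + a) 0 :=
    (((hasDerivAt_id' 0).mul (hasDerivAt_cosh 0)).add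
      ((hasDerivAt_sinh 0).const_mul a)).congr_deriv (by simp)
  obtain ⟨u₁, hu₁, hgu₁⟩ :=
    exists_pos_lt_zero_of_hasDerivAt hderiv (by simp) (by linarith) one_pos
  -- at `T = u₁ - a`: `T cosh T + a sinh T > (T + a) sinh T = u₁ sinh T > 0`
  have hT : 0 < (u₁ - a) * cosh (u₁ - a) + a * sinh (u₁ - a) := by
    have hsinh : 0 < sinh (u₁ - a) := sinh_pos_iff.mpr (by linarith [hu₁.1])
    nlinarith [sinh_lt_cosh (u₁ - a), hu₁.1]
  obtain ⟨u, hu, hgu⟩ := intermediate_value_Ioo (a := u₁) (b := u₁ - a)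
    (f := fun u => u * cosh u + a * sinh u) (by linarith) (by fun_prop) ⟨hgu₁, hT⟩
  exact ⟨u, hu₁.1.trans hu.1, hgu⟩

/-- The number of Dirichlet eigenvalues `(kπ/L)²`, `k ≥ 1`, that are `≤ μ`
(`0` for `μ ≤ 0`, where `√μ = 0`). -/
noncomputable def dirichletCount (L μ : ℝ) : ℕ := ⌊√μ * L / π⌋₊

section DirichletCount

variable {L μ : ℝ}

theorem dirichletCount_lt_iff (hL : 0 < L) {n : ℕ} (hn : n ≠ 0) :
    dirichletCount L μ < n ↔ μ < (n * π / L) ^ 2 := by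
  rw [dirichletCount, Nat.floor_lt (by positivity), div_lt_iff₀ pi_pos, ← lt_div_iff₀ hL,
    sqrt_lt' (by positivity)]

theorem dirichletCount_mono (hL : 0 ≤ L) : Monotone (dirichletCount L) :=
  fun _ _ h => Nat.floor_le_floor (by gcongr)

theorem dirichletCount_of_nonpos (hμ : μ ≤ 0) : dirichletCount L μ = 0 := by
  simp [dirichletCount, sqrt_eq_zero'.mpr hμ]

theorem sqrt_div_sq_mul (hL : 0 < L) {u : ℝ} (hu : 0 ≤ u) : √((u / L) ^ 2) * L = u := by
  rw [sqrt_sq (div_nonneg hu hL.le), div_mul_cancel₀ _ hL.ne']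

theorem Nat.floor_div_pi_eq_of_mem_Ioo {k : ℕ} {u : ℝ} (hu : u ∈ Ioo (k * π) ((k + 1) * π)) :
    ⌊u / π⌋₊ = k := by
  rw [Nat.floor_eq_iff (div_nonneg ((by positivity : (0 : ℝ) ≤ k * π).trans hu.1.le) pi_pos.le),
    le_div_iff₀ pi_pos, div_lt_iff₀ pi_pos]
  exact ⟨hu.1.le, hu.2⟩

end DirichletCount

section Counting

variable {L α μ ν : ℝ}

theorem exists_isRobinDirichletEF_sq_div {u : ℝ} (hL : 0 < L) (hu : 0 < u)
    (h : u * cos u + α * L * sin u = 0) :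
    (∃ f, IsRobinDirichletEF L α ((u / L) ^ 2) f) ∧
      dirichletCount L ((u / L) ^ 2) = ⌊u / π⌋₊ := by
  have hμ : 0 < (u / L) ^ 2 := by positivity
  refine ⟨(exists_isRobinDirichletEF_iff_of_pos hL hμ).mpr ?_,
    by rw [dirichletCount, sqrt_div_sq_mul hL hu.le]⟩
  rwa [sqrt_div_sq_mul hL hu.le]

theorem exists_isRobinDirichletEF_dirichletCount_eq (hL : 0 < L) (k : ℕ) :
    ∃ μ, (∃ f, IsRobinDirichletEF L α μ f) ∧ dirichletCount L μ = k := by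
  rcases Nat.eq_zero_or_pos k with rfl | hk
  · rcases lt_trichotomy (α * L) (-1) with hα | hα | hα
    · obtain ⟨u, hu, hroot⟩ := exists_pos_mul_cosh_add_mul_sinh_eq_zero hα
      have hμ : -(u / L) ^ 2 < 0 := by simp only [neg_lt_zero]; positivity
      refine ⟨-(u / L) ^ 2, (exists_isRobinDirichletEF_iff_of_neg hL hμ).mpr ?_,
        dirichletCount_of_nonpos hμ.le⟩
      rwa [neg_neg, sqrt_div_sq_mul hL hu.le]
    · exact ⟨0, (exists_isRobinDirichletEF_zero_iff hL).mpr hα, dirichletCount_of_nonpos le_rfl⟩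
    · obtain ⟨u, hu, hroot⟩ := exists_mem_Ioo_zero_pi_mul_cos_add_mul_sin_eq_zero hα
      obtain ⟨hef, hcount⟩ := exists_isRobinDirichletEF_sq_div hL hu.1 hroot
      exact ⟨_, hef,
        hcount.trans (Nat.floor_div_pi_eq_of_mem_Ioo (k := 0) (by simpa using hu))⟩
  · obtain ⟨u, hu, hroot⟩ := exists_mem_Ioo_mul_cos_add_mul_sin_eq_zero (α * L) hk.ne'
    obtain ⟨hef, hcount⟩ :=
      exists_isRobinDirichletEF_sq_div hL ((by positivity : (0 : ℝ) ≤ k * π).trans_lt hu.1) hroot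
    exact ⟨_, hef, hcount.trans (Nat.floor_div_pi_eq_of_mem_Ioo hu)⟩

theorem eq_of_dirichletCount_eq_of_pos (hL : 0 < L) (hμ : ∃ f, IsRobinDirichletEF L α μ f)
    (hν : ∃ f, IsRobinDirichletEF L α ν f) (hμ0 : 0 < μ) (hν0 : 0 < ν)
    (h : dirichletCount L μ = dirichletCount L ν) : μ = ν := by
  rw [exists_isRobinDirichletEF_iff_of_pos hL hμ0] at hμ
  rw [exists_isRobinDirichletEF_iff_of_pos hL hν0] at hν
  have := eq_of_mul_cos_add_mul_sin_eq_zero (by positivity) (by positivity) h hμ hν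
  rwa [mul_left_inj' hL.ne', sqrt_inj hμ0.le hν0.le] at this

theorem eq_of_isRobinDirichletEF_of_neg (hL : 0 < L) (hμ : ∃ f, IsRobinDirichletEF L α μ f)
    (hν : ∃ f, IsRobinDirichletEF L α ν f) (hμ0 : μ < 0) (hν0 : ν < 0) : μ = ν := by
  rw [exists_isRobinDirichletEF_iff_of_neg hL hμ0] at hμ
  rw [exists_isRobinDirichletEF_iff_of_neg hL hν0] at hν
  have hpos : ∀ {x : ℝ}, x < 0 → 0 < √(-x) * L := fun hx => by
    have := sqrt_pos.mpr (neg_pos.mpr hx); positivity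
  have := eq_of_mul_cosh_add_mul_sinh_eq_zero (hpos hμ0) (hpos hν0) hμ hν
  rwa [mul_left_inj' hL.ne', sqrt_inj (by linarith) (by linarith), neg_inj] at this

theorem sign_eq_sign_one_add_of_dirichletCount_eq_zero (hL : 0 < L)
    (hμ : ∃ f, IsRobinDirichletEF L α μ f) (h : dirichletCount L μ = 0) :
    SignType.sign μ = SignType.sign (1 + α * L) := by
  rcases lt_trichotomy μ 0 with hμ0 | rfl | hμ0
  · rw [exists_isRobinDirichletEF_iff_of_neg hL hμ0] at hμ
    have hu : 0 < √(-μ) * L := mul_pos (sqrt_pos.mpr (neg_pos.mpr hμ0)) hL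
    have := sinh_lt_mul_cosh hu
    have := sinh_pos_iff.mpr hu
    rw [sign_neg hμ0, sign_neg (by nlinarith)]
  · rw [exists_isRobinDirichletEF_zero_iff hL] at hμ
    simp [hμ]
  · rw [exists_isRobinDirichletEF_iff_of_pos hL hμ0] at hμ
    have hu : 0 < √μ * L := mul_pos (sqrt_pos.mpr hμ0) hL
    have huπ : √μ * L < π := by
      rwa [dirichletCount, Nat.floor_eq_zero, div_lt_one pi_pos] at h
    have := mul_cos_lt_sin hu huπ
    have := sin_pos_of_pos_of_lt_pi hu huπ
    rw [sign_pos hμ0, sign_pos (by nlinarith)]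

theorem eq_of_dirichletCount_eq (hL : 0 < L) (hμ : ∃ f, IsRobinDirichletEF L α μ f)
    (hν : ∃ f, IsRobinDirichletEF L α ν f) (h : dirichletCount L μ = dirichletCount L ν) :
    μ = ν := by
  by_cases hpos : 0 < μ ∧ 0 < ν
  · exact eq_of_dirichletCount_eq_of_pos hL hμ hν hpos.1 hpos.2 h
  have h0 : dirichletCount L μ = 0 ∧ dirichletCount L ν = 0 := by
    rcases not_and_or.mp hpos with hμ0 | hν0
    · have := dirichletCount_of_nonpos (L := L) (not_lt.mp hμ0); omega
    · have := dirichletCount_of_nonpos (L := L) (not_lt.mp hν0); omega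
  have hsign := (sign_eq_sign_one_add_of_dirichletCount_eq_zero hL hμ h0.1).trans
    (sign_eq_sign_one_add_of_dirichletCount_eq_zero hL hν h0.2).symm
  rcases lt_trichotomy μ 0 with hμ0 | rfl | hμ0
  · rw [sign_neg hμ0, eq_comm, sign_eq_neg_one_iff] at hsign
    exact eq_of_isRobinDirichletEF_of_neg hL hμ hν hμ0 hsign
  · rw [_root_.sign_zero, eq_comm, _root_.sign_eq_zero_iff] at hsign
    exact hsign.symm
  · rw [sign_pos hμ0, eq_comm, sign_eq_one_iff] at hsign
    exact absurd ⟨hμ0, hsign⟩ hpos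

end Counting

theorem Nat.eq_self_of_strictMono_of_surjective {g : ℕ → ℕ} (hg : StrictMono g)
    (hs : Function.Surjective g) (m : ℕ) : g m = m :=
  congrArg (fun e : ℕ ≃o ℕ => e m)
    (Subsingleton.elim (hg.orderIsoOfSurjective g hs) (OrderIso.refl ℕ))

theorem dirichletCount_eq_of_enumeration {L α : ℝ} (hL : 0 < L) {lam : ℕ → ℝ}
    (hmono : ∀ m n : ℕ, 1 ≤ m → m < n → lam m < lam n)
    (hev : ∀ n : ℕ, 1 ≤ n → ∃ f, IsRobinDirichletEF L α (lam n) f)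
    (hall : ∀ μ : ℝ, (∃ f, IsRobinDirichletEF L α μ f) → ∃ n : ℕ, 1 ≤ n ∧ lam n = μ) (m : ℕ) :
    dirichletCount L (lam (m + 1)) = m := by
  refine Nat.eq_self_of_strictMono_of_surjective (g := fun m => dirichletCount L (lam (m + 1)))
    (fun i j hij => ?_) (fun k => ?_) m
  · have hlt := hmono (i + 1) (j + 1) (by omega) (by omega)
    exact (dirichletCount_mono hL.le hlt.le).lt_of_ne fun h =>
      hlt.ne (eq_of_dirichletCount_eq hL (hev _ (by omega)) (hev _ (by omega)) h)
  · obtain ⟨μ, hμ, hk⟩ := exists_isRobinDirichletEF_dirichletCount_eq (α := α) hL k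
    obtain ⟨n, hn, rfl⟩ := hall μ hμ
    exact ⟨n - 1, by simpa only [Nat.sub_add_cancel hn] using hk⟩

/-- Dirichlet–Robin interlacing on an interval: if `lam n` (for `n ≥ 1`) enumerates
the eigenvalues of `-f'' = λ f` on `[0, L]` with `f(L) = 0`, `f'(0) = α f(0)` in
increasing order, then `lam n ≤ (nπ/L)² ≤ lam (n+1)` for all `n ≥ 1`, where
`(nπ/L)²` is the `n`-th Dirichlet eigenvalue. -/
theorem stmt_12 (L α : ℝ) (hL : 0 < L)
    (lam : ℕ → ℝ)
    (hmono : ∀ m n : ℕ, 1 ≤ m → m < n → lam m < lam n)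
    (hev : ∀ n : ℕ, 1 ≤ n → ∃ f, IsRobinDirichletEF L α (lam n) f)
    (hall : ∀ μ : ℝ, (∃ f, IsRobinDirichletEF L α μ f) → ∃ n : ℕ, 1 ≤ n ∧ lam n = μ) :
    ∀ n : ℕ, 1 ≤ n →
      lam n ≤ ((n : ℝ) * π / L) ^ 2 ∧ ((n : ℝ) * π / L) ^ 2 ≤ lam (n + 1) := by
  intro n hn
  have hcount := dirichletCount_eq_of_enumeration hL hmono hev hall
  obtain ⟨k, rfl⟩ : ∃ k, n = k + 1 := ⟨n - 1, by omega⟩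
  constructor
  · exact ((dirichletCount_lt_iff hL k.succ_ne_zero).mp (by rw [hcount]; omega)).le
  · refine not_lt.mp fun h => ?_
    have := (dirichletCount_lt_iff hL k.succ_ne_zero).mpr h
    rw [hcount] at this
    omega
end
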